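/- Let H be a conilpotent bialgebra over a field k of characteristic 0 and A a unital associative k-algebra. For f ∈ U(QSh(A), A) and φ ∈ U(H, A), set f ⊙ φ := f ∘ QSh(φ|_{H⁺}) ∘ ι ∈ U(H, A). Then: (i) j ⊙ φ = φ; (ii) for all f, g ∈ U(QSh(A), A), (f * g) ⊙ φ = (f ⊙ φ) * (g ⊙ φ), where * denotes convolution (in U(QSh(A), A) on the left, in U(H, A) on the right); (iii) ⊙ defines a left action of the monoid (U(QSh(A), A), ⊙) on U(H, A); and (iv) if A is commutative, f is a character of QSh(A) and φ a character of H, then f ⊙ φ is a character of H. -/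

import Mathlib

open scoped TensorProduct
open TensorProduct

noncomputable section

namespace QShPaper

variable (k : Type*) [Field k]

/-! ### Convolution algebra of linear maps from a coalgebra to an algebra -/

section Conv

variable {Q : Type*} [AddCommGroup Q] [Module k Q]
variable (A : Type*) [Ring A] [Algebra k A]

/-- The convolution product `f * g := m_A ∘ (f ⊗ g) ∘ Δ` associated to a
comultiplication `com` on `Q`. -/
def conv (com : Q →ₗ[k] Q ⊗[k] Q) (f g : Q →ₗ[k] A) : Q →ₗ[k] A :=
  LinearMap.mul' k A ∘ₗ TensorProduct.map f g ∘ₗ com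

/-- The unit `u_A ∘ η` of the convolution product. -/
def convUnit (cou : Q →ₗ[k] k) : Q →ₗ[k] A := Algebra.linearMap k A ∘ₗ cou

/-- Convolution powers `f^{*n}`, with `f^{*0}` the convolution unit. -/
def convPow (com : Q →ₗ[k] Q ⊗[k] Q) (cou : Q →ₗ[k] k) (f : Q →ₗ[k] A) : ℕ → (Q →ₗ[k] A)
  | 0 => convUnit k A cou
  | n + 1 => conv k A com f (convPow com cou f n)

end Conv

/-! ### Iterated (reduced) coproducts, conilpotency -/

section Red

variable {Q : Type*} [AddCommGroup Q] [Module k Q]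

/-- `Q ≃ Q^{⊗1}`. -/
def toPow1 : Q ≃ₗ[k] ⨂[k]^1 Q := (PiTensorProduct.subsingletonEquiv (s := fun _ : Fin 1 => Q) (0 : Fin 1)).symm

variable (one : Q) (com : Q →ₗ[k] Q ⊗[k] Q)

/-- The reduced coproduct `Δ'(h) := Δ(h) − 1 ⊗ h − h ⊗ 1`. -/
def redComul : Q →ₗ[k] Q ⊗[k] Q :=
  com - TensorProduct.mk k Q Q one - (TensorProduct.mk k Q Q).flip one

/-- Iterated reduced coproducts: `redIter n = Δ'^{[n+1]} : Q → Q^{⊗(n+1)}`,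
with `Δ'^{[1]} = Id` and `Δ'^{[n+1]} = (Id ⊗ Δ'^{[n]}) ∘ Δ'`. -/
def redIter : (n : ℕ) → Q →ₗ[k] ⨂[k]^(n+1) Q
  | 0 => (toPow1 k).toLinearMap
  | n + 1 =>
      (TensorPower.cast k Q (show 1 + (n+1) = n+1+1 by omega)).toLinearMap ∘ₗ
        (TensorPower.mulEquiv (R := k) (M := Q) (n := 1) (m := n+1)).toLinearMap ∘ₗ
          TensorProduct.map (toPow1 k).toLinearMap (redIter n) ∘ₗ redComul k one com

/-- Iterated coproducts: `fullIter n = Δ^{[n+1]} : Q → Q^{⊗(n+1)}`,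
with `Δ^{[1]} = Id` and `Δ^{[n+1]} = (Id ⊗ Δ^{[n]}) ∘ Δ`. -/
def fullIter : (n : ℕ) → Q →ₗ[k] ⨂[k]^(n+1) Q
  | 0 => (toPow1 k).toLinearMap
  | n + 1 =>
      (TensorPower.cast k Q (show 1 + (n+1) = n+1+1 by omega)).toLinearMap ∘ₗ
        (TensorPower.mulEquiv (R := k) (M := Q) (n := 1) (m := n+1)).toLinearMap ∘ₗ
          TensorProduct.map (toPow1 k).toLinearMap (fullIter n) ∘ₗ com

/-- A (coaugmented) coalgebra is (locally) conilpotent if every element of the kernel of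
the counit. is annihilated by some iterated reduced coproduct. -/
def IsConilpotent (cou : Q →ₗ[k] k) : Prop :=
  ∀ x ∈ LinearMap.ker cou, ∃ n, redIter k one com n x = 0

end Red

/-- `m_A^{[n]} ∘ f^{⊗n} : H^{⊗n} → A`. -/
def prodPow {H : Type*} [AddCommGroup H] [Module k H] (A : Type*) [Ring A] [Algebra k A]
    (f : H →ₗ[k] A) (n : ℕ) : (⨂[k]^n H) →ₗ[k] A :=
  PiTensorProduct.lift ((MultilinearMap.mkPiAlgebraFin k n A).compLinearMap fun _ => f)


/-- A model of the quasi-shuffle Hopf algebra `QSh(A) = ⊕_{n≥0} A^{⊗n}` over a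
(possibly non-unital) associative algebra `A`: `emp` is the empty word, `cons` is
prepending of a letter, `mul` is the quasi-shuffle product `⧢`, `comul` the
deconcatenation coproduct and `counit` the counit. -/
structure QShModel (A Q : Type*) [NonUnitalRing A] [Module k A]
    [SMulCommClass k A A] [IsScalarTower k A A] [AddCommGroup Q] [Module k Q] where
  emp : Q
  cons : A →ₗ[k] Q →ₗ[k] Q
  mul : Q →ₗ[k] Q →ₗ[k] Q
  comul : Q →ₗ[k] Q ⊗[k] Q
  counit : Q →ₗ[k] k
  /-- words span `QSh(A)` -/
  span_words : Submodule.span k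
    (Set.range fun w : List A => w.foldr (fun a u => cons a u) emp) = ⊤
  /-- `QSh(A) ≅ k ⊕ (A ⊗ QSh(A))` via `(c, a ⊗ u) ↦ c • 1 + a·u` -/
  theta_bij : Function.Bijective
    ((LinearMap.toSpanSingleton k Q emp).coprod (TensorProduct.lift cons))
  mul_emp_left : ∀ u, mul emp u = u
  mul_emp_right : ∀ u, mul u emp = u
  /-- the quasi-shuffle recursion `av ⧢ bw = a(v ⧢ bw) + b(av ⧢ w) + (a·_A b)(v ⧢ w)` -/
  mul_cons : ∀ (a b : A) (v w : Q),
    mul (cons a v) (cons b w) =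
      cons a (mul v (cons b w)) + cons b (mul (cons a v) w) + cons (a * b) (mul v w)
  comul_emp : comul emp = emp ⊗ₜ[k] emp
  /-- the deconcatenation recursion -/
  comul_cons : ∀ (a : A) (u : Q),
    comul (cons a u) = emp ⊗ₜ[k] (cons a u) + (TensorProduct.map (cons a) LinearMap.id) (comul u)
  counit_emp : counit emp = 1
  counit_cons : ∀ (a : A) (u : Q), counit (cons a u) = 0

namespace QShModel

variable {k}
variable {A Q : Type*} [NonUnitalRing A] [Module k A]
    [SMulCommClass k A A] [IsScalarTower k A A] [AddCommGroup Q] [Module k Q]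

/-- The word `a_1…a_n ∈ QSh(A)`. -/
def ofWord (M : QShModel k A Q) (w : List A) : Q := w.foldr (fun a u => M.cons a u) M.emp

/-- The collapse `H^{⊗(n+1)} → QSh(A)`, `x_1 ⊗ … ⊗ x_{n+1} ↦ c(x_1)…c(x_{n+1})`
(a word of length `n+1`) induced by a linear map `c : H → A`. -/
def wordMap (M : QShModel k A Q) {H : Type*} [AddCommGroup H] [Module k H]
    (c : H →ₗ[k] A) : (n : ℕ) → (⨂[k]^(n+1) H) →ₗ[k] Q
  | 0 => ((M.cons ∘ₗ c).flip M.emp) ∘ₗ (toPow1 k).symm.toLinearMap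
  | n + 1 =>
      TensorProduct.lift (M.cons ∘ₗ c) ∘ₗ
        TensorProduct.map (toPow1 k).symm.toLinearMap (M.wordMap c n) ∘ₗ
          (TensorPower.mulEquiv (R := k) (M := H) (n := 1) (m := n+1)).symm.toLinearMap ∘ₗ
            (TensorPower.cast k H (show n+1+1 = 1+(n+1) by omega)).toLinearMap

/-- `Ψ = QSh(c) ∘ ι : H → QSh(A)`, i.e. `Ψ(1) = 1` and, for `h` in the kernel of the
counit, `Ψ(h) = Σ_{n≥1} c^{⊗n}(Δ'^{[n]}(h))` (a finite sum, each term being viewed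
as a word of length `n`). -/
def IotaComp (M : QShModel k A Q) {H : Type*} [AddCommGroup H] [Module k H]
    (oneH : H) (com : H →ₗ[k] H ⊗[k] H) (cou : H →ₗ[k] k)
    (c : H →ₗ[k] A) (Ψ : H →ₗ[k] Q) : Prop :=
  Ψ oneH = M.emp ∧
    ∀ h ∈ LinearMap.ker cou, ∃ N, ∀ n ≥ N,
      Ψ h = ∑ i ∈ Finset.range (n+1), M.wordMap c i (redIter k oneH com i h)

end QShModel
end QShPaper

namespace QShPaper

/-- The distinguished element `j ∈ U(QSh(A), A)`: `j(1) = 1_A`, `j(a) = a` on letters, and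
`j` vanishes on words of length `≥ 2`. -/
def QShModel.IsJ {k : Type*} [Field k] {A Q : Type*} [Ring A] [Algebra k A]
    [AddCommGroup Q] [Module k Q] (M : QShModel k A Q) (j : Q →ₗ[k] A) : Prop :=
  j M.emp = 1 ∧ (∀ a : A, j (M.cons a M.emp) = a) ∧
    ∀ (a b : A) (u : Q), j (M.cons a (M.cons b u)) = 0

end QShPaper


/-
Write `Ψ := QSh(φ|_{H⁺}) ∘ ι`. On a conilpotent coalgebra, `Ψ` is the unique linear map with
`Ψ 1 = 1` and `Ψ h = [φ h] + (φ ⊗ Ψ)(Δ' h)` for `h ∈ H⁺` (split off the first letter),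
so its properties can be proved by induction along the filtration of `H⁺` by the kernels of the
iterated reduced coproducts: `Δ'` maps each step into `H⁺ ⊗` (the previous step).
Coassociativity of `Δ'` makes `Ψ` a coalgebra morphism, which gives (ii). Since `j` kills all
words of length `≥ 2`, `j ∘ Ψ = φ`, which is (i). For (iii), `Φ_g ∘ Ψ_φ` satisfies the recursion
of `Ψ_{g ⊙ φ}`. For (iv), with `Δ̃ x := Δ x - 1 ⊗ x` one has `Ψ x = (φ ⊗ Ψ)(Δ̃ x)` on `H⁺` and
`Δ̃ (x y) = Δ̃ x Δ̃ y + (1 ⊗ x) Δ̃ y + Δ̃ x (1 ⊗ y)`, whose three terms match the three terms of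
the quasi-shuffle recursion when `φ` is multiplicative.
-/

namespace QShPaper

open LinearMap (ker range)
open Submodule (span)
open TensorProduct (assoc)
open Filter

variable {k : Type*} [Field k]

section TensorRange

variable {V W B C : Type*} [AddCommGroup V] [Module k V] [AddCommGroup W] [Module k W]
  [AddCommGroup B] [Module k B] [AddCommGroup C] [Module k C]

lemma tmul_mem_range_mapIncl {S : Submodule k V} {T : Submodule k W} {x : V} {y : W}
    (hx : x ∈ S) (hy : y ∈ T) : x ⊗ₜ[k] y ∈ range (mapIncl S T) :=
  ⟨⟨x, hx⟩ ⊗ₜ ⟨y, hy⟩, rfl⟩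

lemma eq_of_mem_range_mapIncl {S : Submodule k V} {T : Submodule k W} {t : V ⊗[k] W}
    (ht : t ∈ range (mapIncl S T)) {L L' : V ⊗[k] W →ₗ[k] B}
    (h : ∀ x ∈ S, ∀ y ∈ T, L (x ⊗ₜ y) = L' (x ⊗ₜ y)) : L t = L' t := by
  obtain ⟨r, rfl⟩ := ht
  have : L ∘ₗ mapIncl S T = L' ∘ₗ mapIncl S T := TensorProduct.ext' fun x y => h x x.2 y y.2
  exact LinearMap.congr_fun this r

lemma mem_range_mapIncl_ker {f : V →ₗ[k] B} {g : W →ₗ[k] C} {t : V ⊗[k] W}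
    (hf : f.rTensor W t = 0) (hg : g.lTensor V t = 0) : t ∈ range (mapIncl (ker f) (ker g)) := by
  obtain ⟨s, rfl⟩ := (Module.Flat.rTensor_exact W (LinearMap.exact_subtype_ker_map f) t).mp hf
  have hs : g.lTensor (ker f) s = 0 := by
    apply Module.Flat.rTensor_preserves_injective_linearMap _ (ker f).injective_subtype
    rwa [map_zero, ← LinearMap.comp_apply, LinearMap.rTensor_comp_lTensor,
      ← LinearMap.lTensor_comp_rTensor]
  obtain ⟨r, rfl⟩ :=
    (Module.Flat.lTensor_exact (ker f) (LinearMap.exact_subtype_ker_map g) s).mp hs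
  exact ⟨r, by rw [← LinearMap.comp_apply, LinearMap.rTensor_comp_lTensor]⟩

lemma lTensor_prod_eq_zero {f : W →ₗ[k] B} {g : W →ₗ[k] C} {t : V ⊗[k] W}
    (hf : f.lTensor V t = 0) (hg : g.lTensor V t = 0) : (f.prod g).lTensor V t = 0 := by
  have key : (TensorProduct.prodRight k k V B C).toLinearMap ∘ₗ (f.prod g).lTensor V =
      (f.lTensor V).prod (g.lTensor V) := TensorProduct.ext' fun x y => by simp
  have := LinearMap.congr_fun key t
  simp only [LinearMap.comp_apply, LinearEquiv.coe_coe, LinearMap.prod_apply, Function.prod] at this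
  rw [← (TensorProduct.prodRight k k V B C).map_eq_zero_iff, this, hf, hg, Prod.mk_zero_zero]

end TensorRange

section Counital

variable {V : Type*} [AddCommGroup V] [Module k V]

lemma redComul_apply (one : V) (com : V →ₗ[k] V ⊗[k] V) (h : V) :
    redComul k one com h = com h - one ⊗ₜ[k] h - h ⊗ₜ[k] one := rfl

lemma redIter_succ_apply (one : V) (com : V →ₗ[k] V ⊗[k] V) (n : ℕ) (h : V) :
    redIter k one com (n + 1) h =
      TensorPower.cast k V (show 1 + (n + 1) = n + 1 + 1 by omega)
        (TensorPower.mulEquiv (R := k) (M := V) (n := 1) (m := n + 1)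
          (TensorProduct.map (toPow1 k).toLinearMap (redIter k one com n)
            (redComul k one com h))) := rfl

lemma redIter_zero_eq_zero_iff {one : V} {com : V →ₗ[k] V ⊗[k] V} {h : V} :
    redIter k one com 0 h = 0 ↔ h = 0 :=
  (toPow1 k).map_eq_zero_iff

lemma redIter_succ_eq_zero_iff {one : V} {com : V →ₗ[k] V ⊗[k] V} {n : ℕ} {h : V} :
    redIter k one com (n + 1) h = 0 ↔
      (redIter k one com n).lTensor V (redComul k one com h) = 0 := by
  set e := (toPow1 k (Q := V)).toLinearMap.rTensor (⨂[k]^(n + 1) V)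
  have hinj : Function.Injective e :=
    Module.Flat.rTensor_preserves_injective_linearMap _ (toPow1 k).injective
  rw [redIter_succ_apply, LinearEquiv.map_eq_zero_iff, LinearEquiv.map_eq_zero_iff,
    ← LinearMap.rTensor_comp_lTensor, LinearMap.comp_apply, ← map_zero e, hinj.eq_iff]

structure IsCounital (one : V) (com : V →ₗ[k] V ⊗[k] V) (cou : V →ₗ[k] k) : Prop where
  rTensor_counit_comp_comul : cou.rTensor V ∘ₗ com = TensorProduct.mk k k V 1
  lTensor_counit_comp_comul : cou.lTensor V ∘ₗ com = (TensorProduct.mk k V k).flip 1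
  counit_one : cou one = 1

def redKer (one : V) (com : V →ₗ[k] V ⊗[k] V) (cou : V →ₗ[k] k) (n : ℕ) :
    Submodule k V :=
  ker cou ⊓ ker (redIter k one com n)

variable {one : V} {com : V →ₗ[k] V ⊗[k] V} {cou : V →ₗ[k] k}

lemma redKer_zero : redKer one com cou 0 = ⊥ :=
  eq_bot_iff.2 fun _ hh => redIter_zero_eq_zero_iff.1 (LinearMap.mem_ker.1 hh.2)

namespace IsCounital

variable (hC : IsCounital one com cou)
include hC

lemma linearMap_ext {B : Type*} [AddCommGroup B] [Module k B] {f g : V →ₗ[k] B}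
    (h1 : f one = g one) (h2 : ∀ h ∈ ker cou, f h = g h) : f = g := by
  ext h
  have hh : h - cou h • one ∈ ker cou := by simp [hC.counit_one]
  rw [← sub_add_cancel h (cou h • one), map_add, map_add, map_smul, map_smul, h1, h2 _ hh]

lemma rTensor_counit_redComul {h : V} (hh : h ∈ ker cou) :
    cou.rTensor V (redComul k one com h) = 0 := by
  have h1 : cou.rTensor V (com h) = (1 : k) ⊗ₜ[k] h :=
    LinearMap.congr_fun hC.rTensor_counit_comp_comul h
  rw [redComul_apply, map_sub, map_sub, h1, LinearMap.rTensor_tmul, LinearMap.rTensor_tmul,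
    hC.counit_one, LinearMap.mem_ker.mp hh, TensorProduct.zero_tmul, sub_zero, sub_self]

lemma lTensor_counit_redComul {h : V} (hh : h ∈ ker cou) :
    cou.lTensor V (redComul k one com h) = 0 := by
  have h1 : cou.lTensor V (com h) = h ⊗ₜ[k] (1 : k) :=
    LinearMap.congr_fun hC.lTensor_counit_comp_comul h
  rw [redComul_apply, map_sub, map_sub, h1, LinearMap.lTensor_tmul, LinearMap.lTensor_tmul,
    hC.counit_one, LinearMap.mem_ker.mp hh, TensorProduct.tmul_zero, sub_zero, sub_self]

lemma redComul_mem {h : V} (hh : h ∈ ker cou) :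
    redComul k one com h ∈ range (mapIncl (ker cou) (ker cou)) :=
  mem_range_mapIncl_ker (hC.rTensor_counit_redComul hh) (hC.lTensor_counit_redComul hh)

lemma redComul_mem_of_mem_redKer_succ {n : ℕ} {h : V} (hh : h ∈ redKer one com cou (n + 1)) :
    redComul k one com h ∈ range (mapIncl (ker cou) (redKer one com cou n)) := by
  obtain ⟨hh, hn⟩ := Submodule.mem_inf.1 hh
  have hz : (cou.prod (redIter k one com n)).lTensor V (redComul k one com h) = 0 :=
    lTensor_prod_eq_zero (hC.lTensor_counit_redComul hh)
      (redIter_succ_eq_zero_iff.1 (LinearMap.mem_ker.1 hn))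
  have := mem_range_mapIncl_ker (hC.rTensor_counit_redComul hh) hz
  rwa [LinearMap.ker_prod] at this

lemma ker_le_of_isConilpotent (hcon : IsConilpotent k one com cou) {S : Submodule k V}
    (step : ∀ h ∈ ker cou,
      redComul k one com h ∈ range (mapIncl (ker cou) (ker cou ⊓ S)) → h ∈ S) :
    ker cou ≤ S := by
  have hfilt : ∀ n, redKer one com cou n ≤ S := by
    intro n
    induction n with
    | zero => exact redKer_zero.trans_le bot_le
    | succ n ih =>
      exact fun h hh => step h hh.1 <| range_mapIncl_mono le_rfl (le_inf inf_le_left ih)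
        (hC.redComul_mem_of_mem_redKer_succ hh)
  intro h hh
  obtain ⟨n, hn⟩ := hcon h hh
  exact hfilt n ⟨hh, hn⟩

end IsCounital

end Counital

section Coalgebra

variable {C : Type*} [AddCommGroup C] [Module k C] [Coalgebra k C] {one : C}

local notation "Δ" => Coalgebra.comul (R := k) (A := C)
local notation "ε" => Coalgebra.counit (R := k) (A := C)

lemma isCounital_of_isGroupLikeElem (hone : IsGroupLikeElem k one) : IsCounital one Δ ε :=
  ⟨Coalgebra.rTensor_counit_comp_comul, Coalgebra.lTensor_counit_comp_comul, hone.counit_eq_one⟩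

lemma redComul_self_of_isGroupLikeElem (hone : IsGroupLikeElem k one) :
    redComul k one Δ one = -(one ⊗ₜ one) := by
  rw [redComul_apply, hone.comul_eq_tmul_self]
  abel

lemma redComul_coassoc (hone : IsGroupLikeElem k one) (h : C) :
    (assoc k C C C).symm ((redComul k one Δ).lTensor C (redComul k one Δ h)) =
      (redComul k one Δ).rTensor C (redComul k one Δ h) := by
  have hl : ∀ μ : C ⊗[k] C, (assoc k C C C).symm ((redComul k one Δ).lTensor C μ) =
      (assoc k C C C).symm (LinearMap.lTensor C Δ μ) -
        ((TensorProduct.mk k C C).flip one).rTensor C μ - μ ⊗ₜ one := by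
    intro μ
    induction μ using TensorProduct.induction_on with
    | zero => simp
    | tmul x y => simp [redComul_apply, TensorProduct.tmul_sub, TensorProduct.assoc_symm_tmul]
    | add μ ν hμ hν => simp only [map_add, hμ, hν, TensorProduct.add_tmul]; abel
  have hr : ∀ μ : C ⊗[k] C, (redComul k one Δ).rTensor C μ =
      LinearMap.rTensor C Δ μ - (TensorProduct.mk k C C one).rTensor C μ -
        ((TensorProduct.mk k C C).flip one).rTensor C μ := by
    intro μ
    simp [redComul, LinearMap.rTensor_sub]
  have h1 : (assoc k C C C).symm (one ⊗ₜ Δ h) =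
      (TensorProduct.mk k C C one).rTensor C (Δ h) := by
    induction Δ h using TensorProduct.induction_on with
    | zero => simp
    | tmul x y => simp [TensorProduct.assoc_symm_tmul]
    | add μ ν hμ hν => simp only [TensorProduct.tmul_add, map_add, hμ, hν]
  rw [hl, hr]
  simp only [redComul_apply, map_sub, Coalgebra.coassoc_symm_apply, LinearMap.lTensor_tmul,
    LinearMap.rTensor_tmul, TensorProduct.sub_tmul, TensorProduct.assoc_symm_tmul,
    TensorProduct.mk_apply, LinearMap.flip_apply, hone.comul_eq_tmul_self, h1]
  abel

end Coalgebra

lemma conv_comp_of_comul_comp {V W A : Type*} [AddCommGroup V] [Module k V] [AddCommGroup W]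
    [Module k W] [Ring A] [Algebra k A] {com : V →ₗ[k] V ⊗[k] V} {com' : W →ₗ[k] W ⊗[k] W}
    {Ψ : V →ₗ[k] W} (hΨ : com' ∘ₗ Ψ = map Ψ Ψ ∘ₗ com) (f g : W →ₗ[k] A) :
    conv k A com' f g ∘ₗ Ψ = conv k A com (f ∘ₗ Ψ) (g ∘ₗ Ψ) := by
  simp only [conv, LinearMap.comp_assoc, hΨ, TensorProduct.map_comp]

namespace QShModel

section Model

variable {A Q : Type*} [NonUnitalRing A] [Module k A] [SMulCommClass k A A] [IsScalarTower k A A]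
  [AddCommGroup Q] [Module k Q] (M : QShModel k A Q)

@[simp]
lemma ofWord_nil : M.ofWord [] = M.emp := rfl

@[simp]
lemma ofWord_cons (a : A) (w : List A) : M.ofWord (a :: w) = M.cons a (M.ofWord w) := rfl

lemma linearMap_ext {B : Type*} [AddCommGroup B] [Module k B] {f g : Q →ₗ[k] B}
    (h : ∀ w : List A, f (M.ofWord w) = g (M.ofWord w)) : f = g :=
  LinearMap.ext_on_range M.span_words h

lemma counit_comp_cons (a : A) : M.counit ∘ₗ M.cons a = 0 :=
  LinearMap.ext (M.counit_cons a)

lemma counit_comp_lift_cons : M.counit ∘ₗ TensorProduct.lift M.cons = 0 :=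
  TensorProduct.ext' M.counit_cons

lemma isCounital : IsCounital M.emp M.comul M.counit where
  rTensor_counit_comp_comul := M.linearMap_ext fun w => by
    cases w with
    | nil => simp [M.comul_emp, M.counit_emp]
    | cons a w =>
      have hz : M.counit.rTensor Q ∘ₗ TensorProduct.map (M.cons a) LinearMap.id = 0 := by
        rw [LinearMap.rTensor, ← TensorProduct.map_comp, counit_comp_cons, LinearMap.comp_id,
          TensorProduct.map_zero_left]
      simpa [M.comul_cons, M.counit_emp] using LinearMap.congr_fun hz _
  lTensor_counit_comp_comul := M.linearMap_ext fun w => by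
    induction w with
    | nil => simp [M.comul_emp, M.counit_emp]
    | cons a w ih =>
      have hcomm : M.counit.lTensor Q ∘ₗ TensorProduct.map (M.cons a) LinearMap.id =
          TensorProduct.map (M.cons a) LinearMap.id ∘ₗ M.counit.lTensor Q :=
        TensorProduct.ext' fun _ _ => by simp
      rw [LinearMap.comp_apply, ofWord_cons, M.comul_cons, map_add, LinearMap.lTensor_tmul,
        M.counit_cons, TensorProduct.tmul_zero, zero_add,
        ← LinearMap.comp_apply (LinearMap.lTensor Q M.counit), hcomm, LinearMap.comp_apply,
        ← LinearMap.comp_apply (LinearMap.lTensor Q M.counit), ih]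
      simp
  counit_one := M.counit_emp

lemma redComul_emp : redComul k M.emp M.comul M.emp = -(M.emp ⊗ₜ M.emp) := by
  rw [redComul_apply, M.comul_emp]
  abel

lemma redComul_cons (a : A) (u : Q) :
    redComul k M.emp M.comul (M.cons a u) =
      TensorProduct.map (M.cons a) LinearMap.id (redComul k M.emp M.comul u) +
        M.cons a M.emp ⊗ₜ u := by
  simp only [redComul_apply, M.comul_cons, map_sub, TensorProduct.map_tmul, LinearMap.id_coe,
    id_eq]
  abel

lemma redComul_cons_emp (a : A) : redComul k M.emp M.comul (M.cons a M.emp) = 0 := by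
  simp only [redComul_cons, redComul_emp, map_neg, TensorProduct.map_tmul, LinearMap.id_coe,
    id_eq, neg_add_cancel]

variable {V : Type*} [AddCommGroup V] [Module k V]

def consTensor (c : V →ₗ[k] A) (Ψ : V →ₗ[k] Q) : V ⊗[k] V →ₗ[k] Q :=
  TensorProduct.lift (M.cons ∘ₗ c) ∘ₗ Ψ.lTensor V

@[simp]
lemma consTensor_tmul (c : V →ₗ[k] A) (Ψ : V →ₗ[k] Q) (x y : V) :
    M.consTensor c Ψ (x ⊗ₜ y) = M.cons (c x) (Ψ y) := rfl

lemma consTensor_add_right (c : V →ₗ[k] A) (Ψ₁ Ψ₂ : V →ₗ[k] Q) :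
    M.consTensor c (Ψ₁ + Ψ₂) = M.consTensor c Ψ₁ + M.consTensor c Ψ₂ :=
  TensorProduct.ext' fun _ _ => by simp

lemma consTensor_sum {ι : Type*} (s : Finset ι) (Ψ : ι → V →ₗ[k] Q) :
    M.consTensor c (∑ i ∈ s, Ψ i) = ∑ i ∈ s, M.consTensor c (Ψ i) :=
  TensorProduct.ext' fun x y => by simp [map_sum]

lemma consTensor_eq_lift_cons_comp_map (c : V →ₗ[k] A) (Ψ : V →ₗ[k] Q) :
    M.consTensor c Ψ = TensorProduct.lift M.cons ∘ₗ map c Ψ :=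
  TensorProduct.ext' fun _ _ => rfl

lemma consTensor_comp_map (g : Q →ₗ[k] A) (Φ : Q →ₗ[k] Q) (Ψ : V →ₗ[k] Q) :
    M.consTensor g Φ ∘ₗ map Ψ Ψ = M.consTensor (g ∘ₗ Ψ) (Φ ∘ₗ Ψ) :=
  TensorProduct.ext' fun _ _ => rfl

/-- The term `(a b)(u ⧢ v)` of the quasi-shuffle recursion `au ⧢ bv`. -/
def mergeTerm (c : V →ₗ[k] A) (Ψ : V →ₗ[k] Q) :
    (V ⊗[k] V) ⊗[k] (V ⊗[k] V) →ₗ[k] Q :=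
  TensorProduct.lift M.cons ∘ₗ
    map (LinearMap.mul' k A ∘ₗ map c c) (TensorProduct.lift M.mul ∘ₗ map Ψ Ψ) ∘ₗ
      (TensorProduct.tensorTensorTensorComm k V V V V).toLinearMap

@[simp]
lemma mergeTerm_tmul (c : V →ₗ[k] A) (Ψ : V →ₗ[k] Q) (a u b v : V) :
    M.mergeTerm c Ψ ((a ⊗ₜ u) ⊗ₜ (b ⊗ₜ v)) =
      M.cons (c a * c b) (M.mul (Ψ u) (Ψ v)) := by
  simp [mergeTerm]

lemma mul_consTensor_consTensor (c : V →ₗ[k] A) (Ψ : V →ₗ[k] Q) (s t : V ⊗[k] V) :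
    M.mul (M.consTensor c Ψ s) (M.consTensor c Ψ t) =
      M.mergeTerm c Ψ (s ⊗ₜ t) +
        M.consTensor c (M.mul.flip (M.consTensor c Ψ t) ∘ₗ Ψ) s +
        M.consTensor c (M.mul (M.consTensor c Ψ s) ∘ₗ Ψ) t := by
  induction t using TensorProduct.induction_on with
  | zero => simp [consTensor]
  | add t t' ht ht' =>
    rw [map_add, map_add, ht, ht']
    simp only [map_add, TensorProduct.tmul_add, LinearMap.add_comp, consTensor_add_right,
      LinearMap.add_apply]
    abel
  | tmul b v =>
    induction s using TensorProduct.induction_on with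
    | zero => simp
    | add s s' hs hs' =>
      rw [map_add, LinearMap.map_add₂, hs, hs']
      simp only [map_add, TensorProduct.add_tmul, LinearMap.add_comp, consTensor_add_right,
        LinearMap.add_apply]
      abel
    | tmul a u =>
      simp only [consTensor_tmul, mergeTerm_tmul, M.mul_cons, LinearMap.comp_apply,
        LinearMap.flip_apply]
      abel

/-- The recursive description of `Ψ = QSh(c) ∘ ι` (first letter split off). -/
structure IotaRec (one : V) (com : V →ₗ[k] V ⊗[k] V) (cou : V →ₗ[k] k)
    (c : V →ₗ[k] A) (Ψ : V →ₗ[k] Q) : Prop where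
  apply_one : Ψ one = M.emp
  apply_of_mem_ker : ∀ h ∈ ker cou,
    Ψ h = M.cons (c h) M.emp + M.consTensor c Ψ (redComul k one com h)

/-- The part of `QSh(c) ∘ ι` made of words of length at most `n`. -/
def iotaTrunc (one : V) (com : V →ₗ[k] V ⊗[k] V) (c : V →ₗ[k] A) (n : ℕ) :
    V →ₗ[k] Q :=
  ∑ i ∈ Finset.range n, M.wordMap c i ∘ₗ redIter k one com i

variable {one : V} {com : V →ₗ[k] V ⊗[k] V} {cou : V →ₗ[k] k}
  {c : V →ₗ[k] A} {Ψ : V →ₗ[k] Q}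

lemma wordMap_zero_redIter_zero (h : V) :
    M.wordMap c 0 (redIter k one com 0 h) = M.cons (c h) M.emp := by
  simp [wordMap, redIter]

lemma wordMap_succ_redIter_succ (i : ℕ) (h : V) :
    M.wordMap c (i + 1) (redIter k one com (i + 1) h) =
      M.consTensor c (M.wordMap c i ∘ₗ redIter k one com i) (redComul k one com h) := by
  have hw : ∀ z, M.wordMap c (i + 1) z = TensorProduct.lift (M.cons ∘ₗ c)
      (TensorProduct.map (toPow1 k).symm.toLinearMap (M.wordMap c i)
        ((TensorPower.mulEquiv (R := k) (M := V) (n := 1) (m := i + 1)).symm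
          (TensorPower.cast k V (show i + 1 + 1 = 1 + (i + 1) by omega) z))) := fun _ => rfl
  rw [redIter_succ_apply, hw, TensorPower.cast_cast, TensorPower.cast_refl, LinearEquiv.refl_apply,
    LinearEquiv.symm_apply_apply, TensorProduct.map_map, consTensor, LinearMap.comp_apply,
    LinearMap.lTensor]
  congr 2
  ext v
  simp

lemma iotaTrunc_succ_apply (n : ℕ) (h : V) :
    M.iotaTrunc one com c (n + 1) h =
      M.cons (c h) M.emp + M.consTensor c (M.iotaTrunc one com c n) (redComul k one com h) := by
  rw [iotaTrunc, iotaTrunc, consTensor_sum, LinearMap.sum_apply, LinearMap.sum_apply,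
    Finset.sum_range_succ', LinearMap.comp_apply, wordMap_zero_redIter_zero, add_comm]
  simp only [LinearMap.comp_apply, wordMap_succ_redIter_succ]

lemma redComul_consTensor {t : V ⊗[k] V} (ht : t ∈ range (mapIncl ⊤
      (LinearMap.eqLocus (redComul k M.emp M.comul ∘ₗ Ψ) (map Ψ Ψ ∘ₗ redComul k one com)))) :
    redComul k M.emp M.comul (M.consTensor c Ψ t) =
      (map ((M.cons ∘ₗ c).flip M.emp) Ψ + map (M.consTensor c Ψ) Ψ ∘ₗ
        (assoc k V V V).symm.toLinearMap ∘ₗ (redComul k one com).lTensor V) t := by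
  refine eq_of_mem_range_mapIncl (L := redComul k M.emp M.comul ∘ₗ M.consTensor c Ψ) ht
    fun x _ y hy => ?_
  have hy : redComul k M.emp M.comul (Ψ y) = map Ψ Ψ (redComul k one com y) := hy
  have hassoc : ∀ s : V ⊗[k] V,
      map (M.consTensor c Ψ) Ψ ((assoc k V V V).symm (x ⊗ₜ s)) =
      map (M.cons (c x)) LinearMap.id (map Ψ Ψ s) := by
    intro s
    induction s using TensorProduct.induction_on with
    | zero => simp
    | tmul u v => simp [TensorProduct.assoc_symm_tmul]
    | add s s' hs hs' => simp only [TensorProduct.tmul_add, map_add, hs, hs']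
  simp [redComul_cons, hy, hassoc, add_comm]

variable {M}

lemma IotaComp.eventually_eq_iotaTrunc (hi : M.IotaComp one com cou c Ψ) {h : V}
    (hh : h ∈ ker cou) : ∀ᶠ n in atTop, Ψ h = M.iotaTrunc one com c n h := by
  obtain ⟨N, hN⟩ := hi.2 h hh
  filter_upwards [eventually_ge_atTop (N + 1)] with n hn
  obtain ⟨m, rfl⟩ : ∃ m, n = m + 1 := ⟨n - 1, by omega⟩
  rw [hN m (by omega), iotaTrunc, LinearMap.sum_apply]
  rfl

lemma IotaComp.eventually_consTensor_iotaTrunc (hi : M.IotaComp one com cou c Ψ)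
    {t : V ⊗[k] V} (ht : t ∈ range (mapIncl ⊤ (ker cou))) :
    ∀ᶠ n in atTop, M.consTensor c (M.iotaTrunc one com c n) t = M.consTensor c Ψ t := by
  obtain ⟨r, rfl⟩ := ht
  induction r using TensorProduct.induction_on with
  | zero => simp
  | tmul x y =>
    filter_upwards [hi.eventually_eq_iotaTrunc y.2] with n hn
    simp [hn]
  | add r s hr hs =>
    filter_upwards [hr, hs] with n hr hs
    simp only [map_add, hr, hs]

lemma IotaComp.iotaRec (hi : M.IotaComp one com cou c Ψ) (hC : IsCounital one com cou) :
    M.IotaRec one com cou c Ψ where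
  apply_one := hi.1
  apply_of_mem_ker h hh := by
    obtain ⟨n, hΨ, hΔ⟩ := (((tendsto_add_atTop_nat 1).eventually
      (hi.eventually_eq_iotaTrunc hh)).and (hi.eventually_consTensor_iotaTrunc
        (range_mapIncl_mono le_top le_rfl (hC.redComul_mem hh)))).exists
    rw [hΨ, iotaTrunc_succ_apply, hΔ]

lemma IotaRec.eq_iotaTrunc (hg : M.IotaRec one com cou c Ψ) (hC : IsCounital one com cou)
    {n m : ℕ} (hnm : n ≤ m) {h : V} (hh : h ∈ redKer one com cou n) :
    Ψ h = M.iotaTrunc one com c m h := by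
  induction n generalizing m h with
  | zero =>
    rw [redKer_zero, Submodule.mem_bot] at hh
    simp [hh]
  | succ n ih =>
    obtain ⟨m, rfl⟩ : ∃ m', m = m' + 1 := ⟨m - 1, by omega⟩
    rw [hg.apply_of_mem_ker h (Submodule.mem_inf.1 hh).1, iotaTrunc_succ_apply]
    congr 1
    exact eq_of_mem_range_mapIncl (hC.redComul_mem_of_mem_redKer_succ hh)
      fun x _ y hy => by simp [ih (by omega : n ≤ m) hy]

lemma IotaRec.iotaComp (hg : M.IotaRec one com cou c Ψ) (hC : IsCounital one com cou)
    (hcon : IsConilpotent k one com cou) : M.IotaComp one com cou c Ψ := by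
  refine ⟨hg.apply_one, fun h hh => ?_⟩
  obtain ⟨n, hn⟩ := hcon h hh
  refine ⟨n, fun m hm => ?_⟩
  rw [hg.eq_iotaTrunc hC (by omega : n ≤ m + 1) (Submodule.mem_inf.2 ⟨hh, hn⟩), iotaTrunc,
    LinearMap.sum_apply]
  rfl

lemma IotaRec.apply_mem_range_lift_cons (hg : M.IotaRec one com cou c Ψ) {h : V}
    (hh : h ∈ ker cou) : Ψ h ∈ range (TensorProduct.lift M.cons) := by
  rw [hg.apply_of_mem_ker h hh, consTensor_eq_lift_cons_comp_map, LinearMap.comp_apply]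
  exact add_mem ⟨c h ⊗ₜ M.emp, rfl⟩ ⟨_, rfl⟩

lemma IotaRec.map_apply_of_mem {t : V ⊗[k] V} (hg : M.IotaRec one com cou c Ψ)
    (ht : t ∈ range (mapIncl (ker cou) ⊤)) :
    map Ψ Ψ t = (map ((M.cons ∘ₗ c).flip M.emp) Ψ +
      map (M.consTensor c Ψ) Ψ ∘ₗ (redComul k one com).rTensor V) t :=
  eq_of_mem_range_mapIncl ht fun x hx y _ => by
    simp [hg.apply_of_mem_ker x hx, TensorProduct.add_tmul]

lemma IsJ.comp_cons_comp_lift_cons {A Q : Type*} [Ring A] [Algebra k A] [AddCommGroup Q]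
    [Module k Q] {M : QShModel k A Q} {j : Q →ₗ[k] A} (hj : M.IsJ j) (a : A) :
    j ∘ₗ M.cons a ∘ₗ TensorProduct.lift M.cons = 0 :=
  TensorProduct.ext' (hj.2.2 a)

lemma IotaRec.isJ_comp {A Q : Type*} [Ring A] [Algebra k A] [AddCommGroup Q] [Module k Q]
    {M : QShModel k A Q} {φ : V →ₗ[k] A} {Ψ : V →ₗ[k] Q} {j : Q →ₗ[k] A}
    (hg : M.IotaRec one com cou φ Ψ) (hC : IsCounital one com cou) (hj : M.IsJ j)
    (hφ : φ one = 1) : j ∘ₗ Ψ = φ := by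
  refine hC.linearMap_ext (by simp [hg.apply_one, hj.1, hφ]) fun h hh => ?_
  have hvanish : (j ∘ₗ M.consTensor φ Ψ) (redComul k one com h) = 0 :=
    eq_of_mem_range_mapIncl (L' := 0) (hC.redComul_mem hh) fun x _ y hy => by
      obtain ⟨t, ht⟩ := hg.apply_mem_range_lift_cons hy
      simpa [← ht] using LinearMap.congr_fun (hj.comp_cons_comp_lift_cons (φ x)) t
  rw [LinearMap.comp_apply, hg.apply_of_mem_ker h hh, map_add, hj.2.1]
  simpa using hvanish

end Model

section Coalgebra

variable {C : Type*} [AddCommGroup C] [Module k C] [Coalgebra k C] {one : C}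
variable {A Q : Type*} [NonUnitalRing A] [Module k A] [SMulCommClass k A A] [IsScalarTower k A A]
  [AddCommGroup Q] [Module k Q] {M : QShModel k A Q} {c : C →ₗ[k] A} {Ψ : C →ₗ[k] Q}

local notation "Δ" => Coalgebra.comul (R := k) (A := C)
local notation "ε" => Coalgebra.counit (R := k) (A := C)

lemma IotaRec.redComul_comp (hg : M.IotaRec one Δ ε c Ψ) (hone : IsGroupLikeElem k one)
    (hcon : IsConilpotent k one Δ ε) :
    redComul k M.emp M.comul ∘ₗ Ψ = map Ψ Ψ ∘ₗ redComul k one Δ := by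
  have hC := isCounital_of_isGroupLikeElem hone
  refine hC.linearMap_ext ?_ fun h hh => hC.ker_le_of_isConilpotent hcon (S := LinearMap.eqLocus
    (redComul k M.emp M.comul ∘ₗ Ψ) (map Ψ Ψ ∘ₗ redComul k one Δ)) ?_ hh
  · simp [hg.apply_one, redComul_self_of_isGroupLikeElem hone, M.redComul_emp]
  · intro h hh hΔ
    show redComul k M.emp M.comul (Ψ h) = map Ψ Ψ (redComul k one Δ h)
    rw [hg.apply_of_mem_ker h hh, map_add, M.redComul_cons_emp, zero_add,
      M.redComul_consTensor (range_mapIncl_mono le_top inf_le_right hΔ),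
      hg.map_apply_of_mem (range_mapIncl_mono le_rfl le_top hΔ)]
    -- the two sides expand `Δ'` twice, on the right factor and on the left factor respectively
    simp [redComul_coassoc hone]

lemma IotaRec.comul_comp (hg : M.IotaRec one Δ ε c Ψ) (hone : IsGroupLikeElem k one)
    (hcon : IsConilpotent k one Δ ε) : M.comul ∘ₗ Ψ = map Ψ Ψ ∘ₗ Δ := by
  refine LinearMap.ext fun h => ?_
  have := LinearMap.congr_fun (hg.redComul_comp hone hcon) h
  simpa [redComul_apply, hg.apply_one] using this

lemma IotaRec.comp (hg : M.IotaRec one Δ ε c Ψ) (hone : IsGroupLikeElem k one)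
    (hcon : IsConilpotent k one Δ ε) {g : Q →ₗ[k] A} {Φ : Q →ₗ[k] Q}
    (hΦ : M.IotaRec M.emp M.comul M.counit g Φ) :
    M.IotaRec one Δ ε (g ∘ₗ Ψ) (Φ ∘ₗ Ψ) where
  apply_one := by simp [hg.apply_one, hΦ.apply_one]
  apply_of_mem_ker h hh := by
    have hΨh : Ψ h ∈ ker M.counit := by
      obtain ⟨t, ht⟩ := hg.apply_mem_range_lift_cons hh
      rw [LinearMap.mem_ker, ← ht, ← LinearMap.comp_apply, M.counit_comp_lift_cons,
        LinearMap.zero_apply]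
    rw [LinearMap.comp_apply, hΦ.apply_of_mem_ker _ hΨh, ← LinearMap.comp_apply (redComul _ _ _),
      hg.redComul_comp hone hcon, ← LinearMap.comp_apply (M.consTensor g Φ),
      ← LinearMap.comp_assoc, consTensor_comp_map]
    rfl

end Coalgebra

end QShModel

section Bialgebra

variable {H : Type*} [Ring H] [Bialgebra k H]

local notation "Δ" => Coalgebra.comul (R := k) (A := H)
local notation "ε" => Coalgebra.counit (R := k) (A := H)

variable (k) in
/-- `Δ̃`, which unlike `Δ'` is multiplicative up to two cross terms. -/
def halfRedComul (x : H) : H ⊗[k] H := Δ x - 1 ⊗ₜ x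

lemma halfRedComul_mul (x y : H) :
    halfRedComul k (x * y) = halfRedComul k x * halfRedComul k y +
      (1 ⊗ₜ x) * halfRedComul k y + halfRedComul k x * (1 ⊗ₜ y) := by
  have e : ((1 : H) ⊗ₜ[k] x) * (1 ⊗ₜ y) = 1 ⊗ₜ (x * y) := by
    rw [Algebra.TensorProduct.tmul_mul_tmul, one_mul]
  rw [halfRedComul, halfRedComul, halfRedComul, Bialgebra.comul_mul, ← e]
  noncomm_ring

lemma halfRedComul_eq (x : H) : halfRedComul k x = redComul k 1 Δ x + x ⊗ₜ 1 := by
  rw [halfRedComul, redComul_apply]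
  abel

lemma halfRedComul_mem {n : ℕ} {x : H} (hx : x ∈ redKer (1 : H) Δ ε (n + 1)) :
    halfRedComul k x ∈ range (mapIncl ⊤ (span k {1} ⊔ redKer (1 : H) Δ ε n)) := by
  rw [halfRedComul_eq]
  refine add_mem (range_mapIncl_mono (p := ker ε) le_top le_sup_right ?_)
    (tmul_mem_range_mapIncl trivial (Submodule.mem_sup_left (Submodule.mem_span_singleton_self 1)))
  exact (isCounital_of_isGroupLikeElem IsGroupLikeElem.one).redComul_mem_of_mem_redKer_succ hx

lemma exists_mem_sup_redKer (hcon : IsConilpotent k (1 : H) Δ ε) (x : H) :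
    ∃ n, x ∈ span k {1} ⊔ redKer (1 : H) Δ ε n := by
  have hx : x - ε x • 1 ∈ ker ε := by simp
  obtain ⟨n, hn⟩ := hcon _ hx
  exact ⟨n, Submodule.mem_sup.2 ⟨ε x • 1, Submodule.smul_mem _ _
    (Submodule.mem_span_singleton_self 1), _, ⟨hx, hn⟩, add_sub_cancel _ _⟩⟩

namespace QShModel

variable {A Q : Type*} [NonUnitalRing A] [Module k A] [SMulCommClass k A A] [IsScalarTower k A A]
  [AddCommGroup Q] [Module k Q] (M : QShModel k A Q)

def MulOn (Ψ : H →ₗ[k] Q) (S T : Submodule k H) : Prop :=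
  ∀ x ∈ S, ∀ y ∈ T, Ψ (x * y) = M.mul (Ψ x) (Ψ y)

lemma mulOn_bot_left (Ψ : H →ₗ[k] Q) (T : Submodule k H) : M.MulOn Ψ ⊥ T := by
  rintro x hx y -
  simp [(Submodule.mem_bot k).1 hx]

lemma mulOn_bot_right (Ψ : H →ₗ[k] Q) (S : Submodule k H) : M.MulOn Ψ S ⊥ := by
  rintro x - y hy
  simp [(Submodule.mem_bot k).1 hy]

variable {M} {φ : H →ₗ[k] A} {Ψ : H →ₗ[k] Q}

lemma IotaRec.apply_eq_consTensor_halfRedComul (hg : M.IotaRec 1 Δ ε φ Ψ) {x : H}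
    (hx : x ∈ ker ε) : Ψ x = M.consTensor φ Ψ (halfRedComul k x) := by
  rw [halfRedComul_eq, map_add, consTensor_tmul, hg.apply_one, hg.apply_of_mem_ker x hx, add_comm]

lemma IotaRec.mulOn_sup_span_one (hg : M.IotaRec 1 Δ ε φ Ψ) {S T : Submodule k H}
    (h : M.MulOn Ψ S T) : M.MulOn Ψ (span k {1} ⊔ S) (span k {1} ⊔ T) := by
  intro x hx y hy
  obtain ⟨_, ha, x₀, hx₀, rfl⟩ := Submodule.mem_sup.1 hx
  obtain ⟨a, rfl⟩ := Submodule.mem_span_singleton.1 ha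
  obtain ⟨_, hb, y₀, hy₀, rfl⟩ := Submodule.mem_sup.1 hy
  obtain ⟨b, rfl⟩ := Submodule.mem_span_singleton.1 hb
  simp only [add_mul, mul_add, one_mul, mul_one, smul_mul_assoc, mul_smul_comm, map_add, map_smul,
    hg.apply_one, LinearMap.add_apply, LinearMap.smul_apply, M.mul_emp_left, M.mul_emp_right,
    h x₀ hx₀ y₀ hy₀]

lemma IotaRec.map_mul_of_halfRedComul_mem (hg : M.IotaRec 1 Δ ε φ Ψ)
    (hφ : ∀ x y, φ (x * y) = φ x * φ y) {S T S' T' : Submodule k H} {x y : H}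
    (hx : x ∈ ker ε) (hy : y ∈ ker ε)
    (hxS : halfRedComul k x ∈ range (mapIncl ⊤ S))
    (hyT : halfRedComul k y ∈ range (mapIncl ⊤ T))
    (hxS' : x ∈ S') (hyT' : y ∈ T')
    (hST : M.MulOn Ψ S T) (hST' : M.MulOn Ψ S T') (hS'T : M.MulOn Ψ S' T) :
    Ψ (x * y) = M.mul (Ψ x) (Ψ y) := by
  set L := M.consTensor φ Ψ
  have hmerge : M.mergeTerm φ Ψ (halfRedComul k x ⊗ₜ halfRedComul k y) =
      L (halfRedComul k x * halfRedComul k y) :=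
    eq_of_mem_range_mapIncl hxS
      (L := M.mergeTerm φ Ψ ∘ₗ (TensorProduct.mk k _ _).flip (halfRedComul k y))
      (L' := L ∘ₗ LinearMap.mulRight k (halfRedComul k y)) fun a _ u hu =>
        eq_of_mem_range_mapIncl hyT
          (L := M.mergeTerm φ Ψ ∘ₗ TensorProduct.mk k _ _ (a ⊗ₜ u))
          (L' := L ∘ₗ LinearMap.mulLeft k (a ⊗ₜ u)) fun b _ v hv => by
            simp [L, hφ, hST u hu v hv]
  have hleft : M.consTensor φ (M.mul.flip (Ψ y) ∘ₗ Ψ) (halfRedComul k x) =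
      L (halfRedComul k x * (1 ⊗ₜ y)) :=
    eq_of_mem_range_mapIncl hxS (L' := L ∘ₗ LinearMap.mulRight k (1 ⊗ₜ y)) fun a _ u hu => by
      simp [L, hST' u hu y hyT']
  have hright : M.consTensor φ (M.mul (Ψ x) ∘ₗ Ψ) (halfRedComul k y) =
      L ((1 ⊗ₜ x) * halfRedComul k y) :=
    eq_of_mem_range_mapIncl hyT (L' := L ∘ₗ LinearMap.mulLeft k (1 ⊗ₜ x)) fun b _ v hv => by
      simp [L, hS'T x hxS' v hv]
  have hxy : x * y ∈ ker ε := by simp [LinearMap.mem_ker.1 hx]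
  rw [hg.apply_eq_consTensor_halfRedComul hx, hg.apply_eq_consTensor_halfRedComul hy,
    M.mul_consTensor_consTensor, hg.apply_eq_consTensor_halfRedComul hxy, halfRedComul_mul,
    ← hg.apply_eq_consTensor_halfRedComul hx, ← hg.apply_eq_consTensor_halfRedComul hy,
    map_add, map_add, hmerge, hleft, hright]
  abel

lemma IotaRec.mulOn_redKer (hg : M.IotaRec 1 Δ ε φ Ψ) (hφ : ∀ x y, φ (x * y) = φ x * φ y)
    (p q : ℕ) : M.MulOn Ψ (redKer (1 : H) Δ ε p) (redKer (1 : H) Δ ε q) := by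
  induction h : p + q using Nat.strong_induction_on generalizing p q with
  | _ n ih =>
    rcases p with _ | p
    · rw [redKer_zero]; exact M.mulOn_bot_left _ _
    rcases q with _ | q
    · rw [redKer_zero]; exact M.mulOn_bot_right _ _
    have ih' := fun p' q' (hlt : p' + q' < n) => hg.mulOn_sup_span_one (ih _ hlt p' q' rfl)
    intro x hx y hy
    exact hg.map_mul_of_halfRedComul_mem hφ hx.1 hy.1 (halfRedComul_mem hx) (halfRedComul_mem hy)
      (Submodule.mem_sup_right hx) (Submodule.mem_sup_right hy) (ih' p q (by omega))
      (ih' p (q + 1) (by omega)) (ih' (p + 1) q (by omega))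

lemma IotaRec.map_mul (hg : M.IotaRec 1 Δ ε φ Ψ) (hφ : ∀ x y, φ (x * y) = φ x * φ y)
    (hcon : IsConilpotent k (1 : H) Δ ε) (x y : H) : Ψ (x * y) = M.mul (Ψ x) (Ψ y) := by
  obtain ⟨p, hx⟩ := exists_mem_sup_redKer hcon x
  obtain ⟨q, hy⟩ := exists_mem_sup_redKer hcon y
  exact hg.mulOn_sup_span_one (hg.mulOn_redKer hφ p q) x hx y hy

end QShModel

end Bialgebra

end QShPaper

open QShPaper in
theorem stmt17_action_on_UHA_general
    (k : Type*) [Field k]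
    (H : Type*) [Ring H] [Bialgebra k H]
    (hconil : IsConilpotent k (1 : H) (Coalgebra.comul (R := k) (A := H))
      (Coalgebra.counit (R := k) (A := H)))
    (A : Type*) [Ring A] [Algebra k A]
    (Q : Type*) [AddCommGroup Q] [Module k Q]
    (M : QShModel k A Q) (j : Q →ₗ[k] A) (hj : M.IsJ j) :
    -- `f ⊙ φ ∈ U(H, A)`
    (∀ (f : Q →ₗ[k] A) (φ : H →ₗ[k] A) (Ψ : H →ₗ[k] Q), f M.emp = 1 → φ 1 = 1 →
      M.IotaComp (1 : H) (Coalgebra.comul (R := k) (A := H))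
          (Coalgebra.counit (R := k) (A := H)) φ Ψ →
        (f ∘ₗ Ψ) 1 = 1) ∧
    -- (i) `j ⊙ φ = φ`
    (∀ (φ : H →ₗ[k] A) (Ψ : H →ₗ[k] Q), φ 1 = 1 →
      M.IotaComp (1 : H) (Coalgebra.comul (R := k) (A := H))
          (Coalgebra.counit (R := k) (A := H)) φ Ψ →
        j ∘ₗ Ψ = φ) ∧
    -- (ii) `(f * g) ⊙ φ = (f ⊙ φ) * (g ⊙ φ)`
    (∀ (f g : Q →ₗ[k] A) (φ : H →ₗ[k] A) (Ψ : H →ₗ[k] Q), φ 1 = 1 →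
      M.IotaComp (1 : H) (Coalgebra.comul (R := k) (A := H))
          (Coalgebra.counit (R := k) (A := H)) φ Ψ →
        (conv k A M.comul f g) ∘ₗ Ψ =
          conv k A (Coalgebra.comul (R := k) (A := H)) (f ∘ₗ Ψ) (g ∘ₗ Ψ)) ∧
    -- (iii) `(f ⊙ g) ⊙ φ = f ⊙ (g ⊙ φ)`: `Ψ_{g ⊙ φ} = Φ_g ∘ Ψ_φ`, so `⊙` is a left
    -- action of the monoid `(U(QSh(A),A), ⊙)` (with unit `j`, by (i))
    (∀ (g : Q →ₗ[k] A) (φ : H →ₗ[k] A) (Φg : Q →ₗ[k] Q) (Ψ : H →ₗ[k] Q),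
      g M.emp = 1 → φ 1 = 1 →
      M.IotaComp M.emp M.comul M.counit g Φg →
      M.IotaComp (1 : H) (Coalgebra.comul (R := k) (A := H))
          (Coalgebra.counit (R := k) (A := H)) φ Ψ →
      M.IotaComp (1 : H) (Coalgebra.comul (R := k) (A := H))
          (Coalgebra.counit (R := k) (A := H)) (g ∘ₗ Ψ) (Φg ∘ₗ Ψ)) ∧
    -- (iv) characters act on characters when `A` is commutative
    ((∀ x y : A, x * y = y * x) →
      ∀ (f : Q →ₗ[k] A) (φ : H →ₗ[k] A) (Ψ : H →ₗ[k] Q),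
        f M.emp = 1 → (∀ u v : Q, f (M.mul u v) = f u * f v) →
        φ 1 = 1 → (∀ x y : H, φ (x * y) = φ x * φ y) →
        M.IotaComp (1 : H) (Coalgebra.comul (R := k) (A := H))
            (Coalgebra.counit (R := k) (A := H)) φ Ψ →
        ((f ∘ₗ Ψ) 1 = 1 ∧
          ∀ x y : H, (f ∘ₗ Ψ) (x * y) = (f ∘ₗ Ψ) x * (f ∘ₗ Ψ) y)) := by
  have hone : IsGroupLikeElem k (1 : H) := .one
  have hC := isCounital_of_isGroupLikeElem hone
  refine ⟨fun f φ Ψ hf _ hi => ?_, fun φ Ψ hφ hi => ?_, fun f g φ Ψ _ hi => ?_,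
    fun g φ Φg Ψ _ _ hΦ hi => ?_, fun _ f φ Ψ hf hfm _ hφm hi => ⟨?_, fun x y => ?_⟩⟩
  · rw [LinearMap.comp_apply, hi.1, hf]
  · exact (hi.iotaRec hC).isJ_comp hC hj hφ
  · exact conv_comp_of_comul_comp ((hi.iotaRec hC).comul_comp hone hconil) f g
  · exact ((hi.iotaRec hC).comp hone hconil (hΦ.iotaRec M.isCounital)).iotaComp hC hconil
  · rw [LinearMap.comp_apply, hi.1, hf]
  · simp only [LinearMap.comp_apply, (hi.iotaRec hC).map_mul hφm hconil, hfm]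

open QShPaper in
/-- Let `H` be a conilpotent bialgebra and `A` a unital algebra. For
`f ∈ U(QSh(A), A)` and `φ ∈ U(H, A)` set `f ⊙ φ := f ∘ QSh(φ|_{H⁺}) ∘ ι ∈ U(H, A)`
(below, `M.IotaComp 1 Δ η φ Ψ` expresses that `Ψ = QSh(φ|_{H⁺}) ∘ ι`, so that
`f ⊙ φ = f ∘ₗ Ψ`). Then (i) `j ⊙ φ = φ`; (ii) `(f * g) ⊙ φ = (f ⊙ φ) * (g ⊙ φ)`;
(iii) `⊙` is a left action of the monoid `(U(QSh(A), A), ⊙)` on `U(H, A)`; and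
(iv) if `A` is commutative, `f` a character of `QSh(A)` and `φ` a character of `H`,
then `f ⊙ φ` is a character of `H`. -/
theorem stmt17_action_on_UHA
    (k : Type*) [Field k] [CharZero k]
    (H : Type*) [Ring H] [Bialgebra k H]
    (hconil : IsConilpotent k (1 : H) (Coalgebra.comul (R := k) (A := H))
      (Coalgebra.counit (R := k) (A := H)))
    (A : Type*) [Ring A] [Algebra k A]
    (Q : Type*) [AddCommGroup Q] [Module k Q]
    (M : QShModel k A Q) (j : Q →ₗ[k] A) (hj : M.IsJ j) :
    -- `f ⊙ φ ∈ U(H, A)`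
    (∀ (f : Q →ₗ[k] A) (φ : H →ₗ[k] A) (Ψ : H →ₗ[k] Q), f M.emp = 1 → φ 1 = 1 →
      M.IotaComp (1 : H) (Coalgebra.comul (R := k) (A := H))
          (Coalgebra.counit (R := k) (A := H)) φ Ψ →
        (f ∘ₗ Ψ) 1 = 1) ∧
    -- (i) `j ⊙ φ = φ`
    (∀ (φ : H →ₗ[k] A) (Ψ : H →ₗ[k] Q), φ 1 = 1 →
      M.IotaComp (1 : H) (Coalgebra.comul (R := k) (A := H))
          (Coalgebra.counit (R := k) (A := H)) φ Ψ →
        j ∘ₗ Ψ = φ) ∧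
    -- (ii) `(f * g) ⊙ φ = (f ⊙ φ) * (g ⊙ φ)`
    (∀ (f g : Q →ₗ[k] A) (φ : H →ₗ[k] A) (Ψ : H →ₗ[k] Q), φ 1 = 1 →
      M.IotaComp (1 : H) (Coalgebra.comul (R := k) (A := H))
          (Coalgebra.counit (R := k) (A := H)) φ Ψ →
        (conv k A M.comul f g) ∘ₗ Ψ =
          conv k A (Coalgebra.comul (R := k) (A := H)) (f ∘ₗ Ψ) (g ∘ₗ Ψ)) ∧
    -- (iii) `(f ⊙ g) ⊙ φ = f ⊙ (g ⊙ φ)`: `Ψ_{g ⊙ φ} = Φ_g ∘ Ψ_φ`, so `⊙` is a left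
    -- action of the monoid `(U(QSh(A),A), ⊙)` (with unit `j`, by (i))
    (∀ (g : Q →ₗ[k] A) (φ : H →ₗ[k] A) (Φg : Q →ₗ[k] Q) (Ψ : H →ₗ[k] Q),
      g M.emp = 1 → φ 1 = 1 →
      M.IotaComp M.emp M.comul M.counit g Φg →
      M.IotaComp (1 : H) (Coalgebra.comul (R := k) (A := H))
          (Coalgebra.counit (R := k) (A := H)) φ Ψ →
      M.IotaComp (1 : H) (Coalgebra.comul (R := k) (A := H))
          (Coalgebra.counit (R := k) (A := H)) (g ∘ₗ Ψ) (Φg ∘ₗ Ψ)) ∧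
    -- (iv) characters act on characters when `A` is commutative
    ((∀ x y : A, x * y = y * x) →
      ∀ (f : Q →ₗ[k] A) (φ : H →ₗ[k] A) (Ψ : H →ₗ[k] Q),
        f M.emp = 1 → (∀ u v : Q, f (M.mul u v) = f u * f v) →
        φ 1 = 1 → (∀ x y : H, φ (x * y) = φ x * φ y) →
        M.IotaComp (1 : H) (Coalgebra.comul (R := k) (A := H))
            (Coalgebra.counit (R := k) (A := H)) φ Ψ →
        ((f ∘ₗ Ψ) 1 = 1 ∧
          ∀ x y : H, (f ∘ₗ Ψ) (x * y) = (f ∘ₗ Ψ) x * (f ∘ₗ Ψ) y)) :=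
  stmt17_action_on_UHA_general k H hconil A Q M j hj
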